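/- Assume the two-strain SI model hypotheses. If R_0^x = R_0^y > 1, then the set of equilibria of the two-strain SI system is exactly {E_0} ∪ {E*_α : α ∈ [1,2]}, where E_0 = (Λ/μ_S, 0, 0) and, for α ∈ [1,2], E*_α = (1/r_x, a ↦ (2−α)·(μ_S(R_0^x − 1)/r_x)·π_x(a), a ↦ (α−1)·(μ_S(R_0^y − 1)/r_y)·π_y(a)). In particular, there are infinitely many equilibria in this case. -/

import Mathlib

open MeasureTheory Real Set

/-- Survival probability `π(a) = exp(-∫_0^a μ)`. -/
noncomputable def survival (μ : ℝ → ℝ) (a : ℝ) : ℝ :=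
  Real.exp (-(∫ s in (0:ℝ)..a, μ s))

/-- An equilibrium of the two-strain infection-age structured SI system:
`S ≥ 0`, `x, y ≥ 0` are continuously differentiable on `[0,∞)` with
`x' = -μₓ x`, `y' = -μ_y y`, renewal boundary conditions
`x 0 = S ∫ βₓ x`, `y 0 = S ∫ β_y y`, and the balance `Λ = μ_S S + x 0 + y 0`. -/
def IsEquilibrium (Λ μS : ℝ) (μx μy βx βy : ℝ → ℝ)
    (S : ℝ) (x y : ℝ → ℝ) : Prop :=
  0 ≤ S ∧ (∀ a, 0 ≤ a → 0 ≤ x a) ∧ (∀ a, 0 ≤ a → 0 ≤ y a) ∧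
  (∀ a, 0 ≤ a → HasDerivWithinAt x (-(μx a) * x a) (Ici 0) a) ∧
  (∀ a, 0 ≤ a → HasDerivWithinAt y (-(μy a) * y a) (Ici 0) a) ∧
  x 0 = S * ∫ a in Ici (0:ℝ), βx a * x a ∧
  y 0 = S * ∫ a in Ici (0:ℝ), βy a * y a ∧
  Λ = μS * S + x 0 + y 0

/-!
Every equilibrium density solves the linear ODE `x' = -μₓ x`, so it is `x 0 · πₓ`, and the
renewal condition becomes `x 0 = S · x 0 · rₓ`. Hence either `x 0 = y 0 = 0` (the disease-free
equilibrium) or `S · r = 1` for a strain that is present. When `rₓ = r_y` this does not single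
out a strain: the balance law only fixes the total `x 0 + y 0 = Λ - μ_S / rₓ`, and every split
of this total, with `α - 1` the share of strain `y`, is an equilibrium.
-/

lemma survival_zero (μ : ℝ → ℝ) : survival μ 0 = 1 := by
  simp [survival]

lemma survival_pos (μ : ℝ → ℝ) (a : ℝ) : 0 < survival μ a := Real.exp_pos _

lemma hasDerivWithinAt_intervalIntegral_Ici {μ : ℝ → ℝ} (hμ : ContinuousOn μ (Ici 0)) {a : ℝ}
    (ha : 0 ≤ a) : HasDerivWithinAt (fun u => ∫ s in (0:ℝ)..u, μ s) (μ a) (Ici 0) a := by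
  have hint : IntervalIntegrable μ volume 0 a :=
    (hμ.mono fun z hz => (uIcc_of_le ha ▸ hz).1).intervalIntegrable
  rcases ha.eq_or_lt with rfl | ha
  · exact intervalIntegral.integral_hasDerivWithinAt_right hint
      ((hμ.stronglyMeasurableAtFilter_nhdsWithin measurableSet_Ici 0).filter_mono
        (nhdsWithin_mono _ Ioi_subset_Ici_self))
      ((hμ 0 self_mem_Ici).mono Ioi_subset_Ici_self)
  · exact (intervalIntegral.integral_hasDerivAt_right hint
      ⟨Ici 0, Ici_mem_nhds ha, hμ.aestronglyMeasurable measurableSet_Ici⟩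
      (hμ.continuousAt (Ici_mem_nhds ha))).hasDerivWithinAt

lemma hasDerivWithinAt_survival {μ : ℝ → ℝ} (hμ : ContinuousOn μ (Ici 0)) {a : ℝ} (ha : 0 ≤ a) :
    HasDerivWithinAt (survival μ) (-(μ a) * survival μ a) (Ici 0) a :=
  (hasDerivWithinAt_intervalIntegral_Ici hμ ha).neg.exp.congr_deriv (mul_comm _ _)

lemma eq_mul_survival_of_hasDerivWithinAt {μ x : ℝ → ℝ} (hμ : ContinuousOn μ (Ici 0))
    (hx : ∀ a, 0 ≤ a → HasDerivWithinAt x (-(μ a) * x a) (Ici 0) a) {a : ℝ} (ha : 0 ≤ a) :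
    x a = x 0 * survival μ a := by
  have hquot : ∀ u, 0 ≤ u → HasDerivWithinAt (fun v => x v / survival μ v) 0 (Ici 0) u :=
    fun u hu => ((hx u hu).div (hasDerivWithinAt_survival hμ hu)
      (survival_pos μ u).ne').congr_deriv (by ring)
  have hconst := constant_of_has_deriv_right_zero (a := 0) (b := a)
    (fun u hu => (hquot u hu.1).continuousWithinAt.mono Icc_subset_Ici_self)
    (fun u hu => (hquot u hu.1).mono (Ici_subset_Ici.2 hu.1)) a ⟨ha, le_rfl⟩
  rw [survival_zero, div_one, div_eq_iff (survival_pos μ a).ne'] at hconst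
  exact hconst

lemma setIntegral_mul_eq_of_eq_mul_survival {μ β x : ℝ → ℝ} {c : ℝ}
    (hx : ∀ a, 0 ≤ a → x a = c * survival μ a) :
    ∫ a in Ici (0:ℝ), β a * x a = c * ∫ a in Ici (0:ℝ), β a * survival μ a := by
  rw [← integral_const_mul]
  refine setIntegral_congr_fun measurableSet_Ici fun a ha => ?_
  rw [hx a ha]
  ring

lemma eq_diseaseFree_or_endemic_of_balance {Λ μS r S u v : ℝ} (hμS : 0 < μS) (hr : 0 < r)
    (hK : 0 < Λ - μS / r) (hu : 0 ≤ u) (hv : 0 ≤ v) (hub : u = S * (u * r))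
    (hvb : v = S * (v * r)) (hbal : Λ = μS * S + u + v) :
    (S = Λ / μS ∧ u = 0 ∧ v = 0) ∨
      ∃ α ∈ Icc (1:ℝ) 2, S = 1 / r ∧ u = (2 - α) * (Λ - μS / r) ∧
        v = (α - 1) * (Λ - μS / r) := by
  by_cases h0 : u = 0 ∧ v = 0
  · obtain ⟨rfl, rfl⟩ := h0
    left
    refine ⟨?_, rfl, rfl⟩
    field_simp
    linarith
  right
  have hSr : S * r = 1 := by
    by_contra hSr
    have hne : 1 - S * r ≠ 0 := sub_ne_zero.2 (Ne.symm hSr)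
    exact h0 ⟨(mul_eq_zero.1 (by linear_combination hub : u * (1 - S * r) = 0)).resolve_right hne,
      (mul_eq_zero.1 (by linear_combination hvb : v * (1 - S * r) = 0)).resolve_right hne⟩
  have hS : S = 1 / r := by field_simp; linarith
  set K := Λ - μS / r
  have hsum : u + v = K := by
    rw [hS] at hbal
    linear_combination -hbal
  refine ⟨1 + v / K, ⟨?_, ?_⟩, hS, ?_, ?_⟩
  · linarith [div_nonneg hv hK.le]
  · linarith [(div_le_one hK).2 (by linarith : v ≤ K)]
  · field_simp
    linarith
  · field_simp
    ring

section Equilibrium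

variable {Λ μS : ℝ} {μx μy βx βy : ℝ → ℝ} {rx ry : ℝ}

lemma isEquilibrium_mul_survival (hμx : ContinuousOn μx (Ici 0))
    (hμy : ContinuousOn μy (Ici 0)) (hrx : rx = ∫ a in Ici (0:ℝ), βx a * survival μx a)
    (hry : ry = ∫ a in Ici (0:ℝ), βy a * survival μy a) {S cx cy : ℝ} (hS : 0 ≤ S)
    (hcx : 0 ≤ cx) (hcy : 0 ≤ cy) (hbx : cx = S * (cx * rx)) (hby : cy = S * (cy * ry))
    (hbal : Λ = μS * S + cx + cy) :
    IsEquilibrium Λ μS μx μy βx βy S (fun a => cx * survival μx a)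
      (fun a => cy * survival μy a) := by
  refine ⟨hS, fun a _ => mul_nonneg hcx (survival_pos μx a).le,
    fun a _ => mul_nonneg hcy (survival_pos μy a).le,
    fun a ha => ((hasDerivWithinAt_survival hμx ha).const_mul cx).congr_deriv (by ring),
    fun a ha => ((hasDerivWithinAt_survival hμy ha).const_mul cy).congr_deriv (by ring),
    ?_, ?_, ?_⟩ <;>
  simp only [survival_zero, mul_one]
  · rwa [setIntegral_mul_eq_of_eq_mul_survival fun _ _ => rfl, ← hrx]
  · rwa [setIntegral_mul_eq_of_eq_mul_survival fun _ _ => rfl, ← hry]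
  · exact hbal

lemma IsEquilibrium.eq_mul_survival {S : ℝ} {x y : ℝ → ℝ}
    (h : IsEquilibrium Λ μS μx μy βx βy S x y) (hμx : ContinuousOn μx (Ici 0))
    (hμy : ContinuousOn μy (Ici 0)) (hrx : rx = ∫ a in Ici (0:ℝ), βx a * survival μx a)
    (hry : ry = ∫ a in Ici (0:ℝ), βy a * survival μy a) :
    (∀ a, 0 ≤ a → x a = x 0 * survival μx a) ∧ (∀ a, 0 ≤ a → y a = y 0 * survival μy a) ∧
      x 0 = S * (x 0 * rx) ∧ y 0 = S * (y 0 * ry) := by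
  obtain ⟨-, -, -, hx', hy', hbx, hby, -⟩ := h
  have hx := fun a ha => eq_mul_survival_of_hasDerivWithinAt hμx hx' (a := a) ha
  have hy := fun a ha => eq_mul_survival_of_hasDerivWithinAt hμy hy' (a := a) ha
  rw [setIntegral_mul_eq_of_eq_mul_survival hx, ← hrx] at hbx
  rw [setIntegral_mul_eq_of_eq_mul_survival hy, ← hry] at hby
  exact ⟨hx, hy, hbx, hby⟩

lemma isEquilibrium_diseaseFree (hΛ : 0 ≤ Λ) (hμS : 0 < μS) :
    IsEquilibrium Λ μS μx μy βx βy (Λ / μS) (fun _ => 0) (fun _ => 0) :=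
  ⟨div_nonneg hΛ hμS.le, fun _ _ => le_rfl, fun _ _ => le_rfl,
    fun a _ => by simpa using hasDerivWithinAt_const a (Ici (0:ℝ)) (0:ℝ),
    fun a _ => by simpa using hasDerivWithinAt_const a (Ici (0:ℝ)) (0:ℝ),
    by simp, by simp, by simp [mul_div_cancel₀ _ hμS.ne']⟩

variable {r : ℝ}

lemma isEquilibrium_endemic (hμx : ContinuousOn μx (Ici 0))
    (hμy : ContinuousOn μy (Ici 0)) (hrx : r = ∫ a in Ici (0:ℝ), βx a * survival μx a)
    (hry : r = ∫ a in Ici (0:ℝ), βy a * survival μy a) (hr : 0 < r) (hK : 0 ≤ Λ - μS / r)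
    {α : ℝ} (hα : α ∈ Icc (1:ℝ) 2) :
    IsEquilibrium Λ μS μx μy βx βy (1 / r) (fun a => (2 - α) * (Λ - μS / r) * survival μx a)
      (fun a => (α - 1) * (Λ - μS / r) * survival μy a) :=
  isEquilibrium_mul_survival hμx hμy hrx hry (by positivity)
    (mul_nonneg (by linarith [hα.2]) hK) (mul_nonneg (by linarith [hα.1]) hK)
    (by field_simp) (by field_simp) (by field_simp; ring)

lemma IsEquilibrium.eq_diseaseFree_or_endemic {S : ℝ} {x y : ℝ → ℝ}
    (h : IsEquilibrium Λ μS μx μy βx βy S x y) (hμx : ContinuousOn μx (Ici 0))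
    (hμy : ContinuousOn μy (Ici 0)) (hrx : r = ∫ a in Ici (0:ℝ), βx a * survival μx a)
    (hry : r = ∫ a in Ici (0:ℝ), βy a * survival μy a) (hμS : 0 < μS) (hr : 0 < r)
    (hK : 0 < Λ - μS / r) :
    (S = Λ / μS ∧ (∀ a, 0 ≤ a → x a = 0) ∧ (∀ a, 0 ≤ a → y a = 0)) ∨
      (∃ α ∈ Icc (1:ℝ) 2, S = 1 / r ∧
        (∀ a, 0 ≤ a → x a = (2 - α) * (Λ - μS / r) * survival μx a) ∧
        (∀ a, 0 ≤ a → y a = (α - 1) * (Λ - μS / r) * survival μy a)) := by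
  obtain ⟨hx, hy, hbx, hby⟩ := h.eq_mul_survival hμx hμy hrx hry
  obtain ⟨-, hx0, hy0, -, -, -, -, hbal⟩ := h
  rcases eq_diseaseFree_or_endemic_of_balance hμS hr hK (hx0 0 le_rfl) (hy0 0 le_rfl) hbx hby
    hbal with ⟨hS, hx00, hy00⟩ | ⟨α, hα, hS, hx00, hy00⟩
  · left
    exact ⟨hS, fun a ha => by rw [hx a ha, hx00, zero_mul],
      fun a ha => by rw [hy a ha, hy00, zero_mul]⟩
  · right
    exact ⟨α, hα, hS, fun a ha => by rw [hx a ha, hx00], fun a ha => by rw [hy a ha, hy00]⟩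

lemma infinite_setOf_isEquilibrium {K : ℝ} (hK : K ≠ 0)
    (h : ∀ α ∈ Icc (1:ℝ) 2, IsEquilibrium Λ μS μx μy βx βy (1 / r)
      (fun a => (2 - α) * K * survival μx a) (fun a => (α - 1) * K * survival μy a)) :
    Set.Infinite {p : ℝ × (ℝ → ℝ) × (ℝ → ℝ) |
      IsEquilibrium Λ μS μx μy βx βy p.1 p.2.1 p.2.2} := by
  refine Set.infinite_of_injOn_mapsTo (fun α _ β _ hαβ => ?_) (f := fun α =>
    (1 / r, fun a => (2 - α) * K * survival μx a, fun a => (α - 1) * K * survival μy a))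
    h (Icc_infinite one_lt_two)
  have h0 := congrFun (congrArg (fun p => p.2.1) hαβ) 0
  simp only [survival_zero, mul_one] at h0
  linarith [mul_right_cancel₀ hK h0]

end Equilibrium

/-- **If `R₀ˣ = R₀ʸ > 1`, the set of equilibria of the two-strain SI system is
exactly `{E₀} ∪ {E*_α : α ∈ [1,2]}`; in particular there are infinitely many
equilibria.** -/
theorem equilibria_continuum (Λ μS : ℝ) (μx μy βx βy : ℝ → ℝ)
    (hΛ : 0 < Λ) (hμS : 0 < μS)
    (hμxc : ContinuousOn μx (Ici 0)) (hμyc : ContinuousOn μy (Ici 0))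
    (rx ry : ℝ)
    (hrx : rx = ∫ a in Ici (0:ℝ), βx a * survival μx a)
    (hry : ry = ∫ a in Ici (0:ℝ), βy a * survival μy a)
    (hrxpos : 0 < rx)
    (R0x R0y : ℝ) (hR0x : R0x = Λ * rx / μS) (hR0y : R0y = Λ * ry / μS)
    (R0x R0y : ℝ) (hR0x : R0x = Λ * rx / μS) (hR0y : R0y = Λ * ry / μS)
    (heq : R0x = R0y) (hRx : 1 < R0x) :
    IsEquilibrium Λ μS μx μy βx βy (Λ / μS) (fun _ => 0) (fun _ => 0) ∧
    (∀ α ∈ Icc (1:ℝ) 2,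
      IsEquilibrium Λ μS μx μy βx βy (1 / rx)
        (fun a => (2 - α) * (μS * (R0x - 1) / rx) * survival μx a)
        (fun a => (α - 1) * (μS * (R0y - 1) / ry) * survival μy a)) ∧
    (∀ S x y, IsEquilibrium Λ μS μx μy βx βy S x y →
      (S = Λ / μS ∧ (∀ a, 0 ≤ a → x a = 0) ∧ (∀ a, 0 ≤ a → y a = 0)) ∨
      (∃ α ∈ Icc (1:ℝ) 2, S = 1 / rx ∧
        (∀ a, 0 ≤ a → x a = (2 - α) * (μS * (R0x - 1) / rx) * survival μx a) ∧
        (∀ a, 0 ≤ a → y a = (α - 1) * (μS * (R0y - 1) / ry) * survival μy a))) ∧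
    Set.Infinite {p : ℝ × (ℝ → ℝ) × (ℝ → ℝ) |
      IsEquilibrium Λ μS μx μy βx βy p.1 p.2.1 p.2.2} := by
  obtain rfl : rx = ry := by
    rw [hR0x, hR0y] at heq
    field_simp at heq
    exact heq
  have hKx : μS * (R0x - 1) / rx = Λ - μS / rx := by
    rw [hR0x]
    field_simp
  have hKy : μS * (R0y - 1) / rx = Λ - μS / rx := heq ▸ hKx
  have hK : 0 < Λ - μS / rx := hKx ▸ div_pos (mul_pos hμS (by linarith)) hrxpos
  simp only [hKx, hKy]
  have hendemic := fun α (hα : α ∈ Icc (1:ℝ) 2) =>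
    isEquilibrium_endemic (βx := βx) (βy := βy) hμxc hμyc hrx hry hrxpos hK.le hα
  exact ⟨isEquilibrium_diseaseFree hΛ.le hμS, hendemic,
    fun S x y hE => hE.eq_diseaseFree_or_endemic hμxc hμyc hrx hry hμS hrxpos hK,
    infinite_setOf_isEquilibrium hK.ne' hendemic⟩
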